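/- arXiv:2503.14216 — 2 statements merged into one kernel-verified Lean document; each statement's English description precedes it below -/
import Mathlib

section
/- Let R = ℂ[x₁,…,x_n], a ∈ ℕ^n with support I := {i : a_i ≠ 0} nonempty, f := x^a, and let D be the Weyl algebra acting on the module N := R[T] by g·(hT^k) = gh T^k and ∂_i(h T^k) = (∂h/∂x_i)T^k − (∂f/∂x_i) h T^{k+1}. Define F_k^{t-ord} N := Σ_{i=0}^k R·T^i and let F_k D denote the order filtration of the Weyl algebra. Then for every b ∈ ℕ^n with supp(b) ⊆ I and every k ≥ 0: (F_k^{t-ord} N) ∩ (D · x^b T^0) = F_k D · (x^b T^0). -/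
/-! The t-order of `∂^β x^b` is `|β|`: its top coefficient is `(-a)^β x^(b + |β| a - β)` when
`supp β ⊆ supp a`, and `∂^β x^b = 0` otherwise. Hence an element of `F_{m+1} D · x^b` whose
coefficient of `T^(m+1)` vanishes is, modulo `F_m D · x^b`, a scalar combination of normalised
generators `x^δ ∂^β x^b / (-a)^β` (with `|β| = m + 1`) whose top monomials cancel. Grouping the
generators by top monomial, it suffices that two generators with the same top monomial agree
modulo `F_m D · x^b`. They are joined by exchanges `β ↦ β - e_i + e_j`, and each exchange is the
Euler-type identity
`(a_j x_i ∂_i - a_i x_j ∂_j) ∂^γ x^b = (a_j (b_i - γ_i) - a_i (b_j - γ_j)) ∂^γ x^b`,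
in which the `T`-shifting parts cancel because `x_i ∂_i f = a_i f`.
Descending in `m` proves the claim, since by the Leibniz rule `D · x^b` is the union of the
`F_m D · x^b`. -/

open Polynomial

section Finsupp

variable {ι : Type*}

theorem Finsupp.induction_single_one {P : (ι →₀ ℕ) → Prop} (zero : P 0)
    (add_single : ∀ β i, P β → P (β + single i 1)) (β : ι →₀ ℕ) : P β := by
  classical
  rw [← Finsupp.toMultiset_toFinsupp β]
  induction β.toMultiset using Multiset.induction with
  | empty => simpa using zero
  | cons i s ih =>
    rw [← Multiset.singleton_add, Multiset.toFinsupp_add, Multiset.toFinsupp_singleton, add_comm]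
    exact add_single _ i ih

theorem Finsupp.card_toMultiset_eq_degree (β : ι →₀ ℕ) :
    Multiset.card β.toMultiset = β.degree :=
  Finsupp.card_toMultiset β

theorem Finsupp.eq_of_le_of_degree_le {β β' : ι →₀ ℕ} (h : β ≤ β')
    (hd : β'.degree ≤ β.degree) : β = β' := by
  have hsum := congrArg Finsupp.degree (add_tsub_cancel_of_le h)
  rw [map_add] at hsum
  have : β' - β = 0 := (Finsupp.degree_eq_zero_iff _).1 (by omega)
  exact le_antisymm h (tsub_eq_zero_iff_le.1 this)

theorem Finsupp.exists_lt_of_ne_of_degree_eq {β β' : ι →₀ ℕ} (hne : β ≠ β')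
    (hd : β.degree = β'.degree) : ∃ i, β' i < β i := by
  by_contra! h
  exact hne (Finsupp.eq_of_le_of_degree_le h hd.ge)

theorem Finsupp.exchange_add_eq [DecidableEq ι] {β β' δ δ' : ι →₀ ℕ} {i j : ι}
    (hi : β' i < β i) (hδ : δ + β' = δ' + β) :
    δ - single i 1 + single j 1 + β' = δ' + (β - single i 1 + single j 1) := by
  ext r
  have := DFunLike.congr_fun hδ r
  simp only [Finsupp.add_apply, Finsupp.tsub_apply, Finsupp.single_apply] at this ⊢
  split_ifs <;> subst_vars <;> omega

theorem Finsupp.exchange_sub_add_single [DecidableEq ι] {β β' : ι →₀ ℕ} {i j : ι}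
    (hi : β' i < β i) (hj : β j < β' j) :
    β - single i 1 + single j 1 - β' + single i 1 = β - β' := by
  ext r
  simp only [Finsupp.add_apply, Finsupp.tsub_apply, Finsupp.single_apply]
  split_ifs <;> subst_vars <;> omega

theorem Finsupp.add_eq_add_of_add_tsub_eq {β β' δ δ' γ : ι →₀ ℕ} (hβ : β ≤ γ) (hβ' : β' ≤ γ)
    (h : δ + (γ - β) = δ' + (γ - β')) : δ + β' = δ' + β := by
  ext r
  have := DFunLike.congr_fun h r
  have := hβ r
  have := hβ' r
  simp only [Finsupp.add_apply, Finsupp.tsub_apply] at *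
  omega

theorem Finsupp.le_add_degree_smul {a β : ι →₀ ℕ} (hβ : β.support ⊆ a.support)
    (b : ι →₀ ℕ) : β ≤ b + β.degree • a := fun r => by
  have hr := Finsupp.le_degree r β
  have : β r ≠ 0 → a r ≠ 0 := fun h => Finsupp.mem_support_iff.1 (hβ (mem_support_iff.2 h))
  simp only [Finsupp.add_apply, Finsupp.smul_apply, smul_eq_mul]
  rcases Nat.eq_zero_or_pos (β r) with h | h
  · omega
  · nlinarith [Nat.one_le_iff_ne_zero.2 (this h.ne')]

end Finsupp

theorem MvPolynomial.pderiv_comm {σ K : Type*} [CommRing K] (i j : σ) (g : MvPolynomial σ K) :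
    pderiv i (pderiv j g) = pderiv j (pderiv i g) := by
  classical
  have : ⁅pderiv i, pderiv j⁆ = (0 : Derivation K (MvPolynomial σ K) (MvPolynomial σ K)) :=
    derivation_ext fun k => by
      rw [Derivation.commutator_apply]
      simp [pderiv_X, Pi.single_apply, apply_ite (pderiv _)]
  have h := congr($this g)
  rwa [Derivation.commutator_apply, Derivation.zero_apply, sub_eq_zero] at h

theorem MvPolynomial.prod_X_pow_eq_monomial_equivFunOnFinite {σ R : Type*} [Fintype σ]
    [CommSemiring R] (e : σ → ℕ) :
    ∏ r, (X r : MvPolynomial σ R) ^ e r = monomial (Finsupp.equivFunOnFinite.symm e) 1 := by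
  rw [monomial_eq, C_1, one_mul, Finsupp.prod_fintype _ _ fun _ => pow_zero _]
  rfl

theorem Polynomial.span_X_pow_eq_degreeLE (R : Type*) [CommSemiring R] (k : ℕ) :
    Submodule.span R {p : R[X] | ∃ i ≤ k, p = X ^ i} = degreeLE R k := by
  classical
  rw [degreeLE_eq_span_X_pow]
  congr 1
  ext p
  simp [eq_comm]

theorem Submodule.sum_smul_mem_of_sum_fiber_eq_zero {ι κ R M : Type*} [Ring R] [AddCommGroup M]
    [Module R M] [DecidableEq κ] (N : Submodule R M) (s : Finset ι) (c : ι → R) (v : ι → M)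
    (key : ι → κ) (hc : ∀ y, ∑ p ∈ s with key p = y, c p = 0)
    (hv : ∀ p ∈ s, ∀ q ∈ s, key p = key q → v p - v q ∈ N) : ∑ p ∈ s, c p • v p ∈ N := by
  rw [← Finset.sum_fiberwise_of_maps_to fun p hp => Finset.mem_image_of_mem key hp]
  refine sum_mem fun y hy => ?_
  obtain ⟨p₀, hp₀, rfl⟩ := Finset.mem_image.1 hy
  have : ∑ p ∈ s with key p = key p₀, c p • v p =
      ∑ p ∈ s with key p = key p₀, c p • (v p - v p₀) := by
    simp only [smul_sub, Finset.sum_sub_distrib, ← Finset.sum_smul, hc, zero_smul, sub_zero]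
  rw [this]
  exact sum_mem fun p hp =>
    N.smul_mem _ (hv p (Finset.mem_filter.1 hp).1 p₀ hp₀ (Finset.mem_filter.1 hp).2)

section CommutingFamily

variable {ι S M : Type*} [Semiring S] [AddCommMonoid M] [Module S M]

noncomputable def dPow (D : ι → M →ₗ[S] M) (β : ι →₀ ℕ) : Module.End S M :=
  (β.toMultiset.toList.map D).prod

variable {D : ι → M →ₗ[S] M}

theorem List.foldr_apply_eq_prod_map (L : List ι) (v : M) :
    L.foldr (fun i w => D i w) v = (L.map D).prod v := by
  induction L with
  | nil => rfl
  | cons i L ih => simp [ih, Module.End.mul_apply]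

@[simp] theorem dPow_zero : dPow D 0 = 1 := by simp [dPow]

theorem dPow_single_one (i : ι) : dPow D (Finsupp.single i 1) = D i := by
  simp [dPow, Finsupp.toMultiset_single]

theorem prod_map_eq_of_perm (hc : ∀ i j, Commute (D i) (D j)) {L L' : List ι}
    (h : L.Perm L') : (L.map D).prod = (L'.map D).prod :=
  (h.map D).prod_eq' <| List.pairwise_map.2 <| List.pairwise_of_forall fun i j => hc i j

theorem prod_map_eq_dPow [DecidableEq ι] (hc : ∀ i j, Commute (D i) (D j)) (L : List ι) :
    (L.map D).prod = dPow D (Multiset.toFinsupp L) :=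
  prod_map_eq_of_perm hc <| by
    rw [← Multiset.coe_eq_coe, Multiset.coe_toList, Multiset.toFinsupp_toMultiset]

theorem dPow_add (hc : ∀ i j, Commute (D i) (D j)) (β γ : ι →₀ ℕ) :
    dPow D (β + γ) = dPow D β * dPow D γ := by
  rw [dPow, dPow, dPow, ← List.prod_append, ← List.map_append]
  refine prod_map_eq_of_perm hc ?_
  rw [← Multiset.coe_eq_coe, ← Multiset.coe_add, Multiset.coe_toList, Multiset.coe_toList,
    Multiset.coe_toList, Finsupp.toMultiset_add]

theorem dPow_add_single_one (hc : ∀ i j, Commute (D i) (D j)) (β : ι →₀ ℕ) (i : ι) :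
    dPow D (β + Finsupp.single i 1) = D i * dPow D β := by
  rw [add_comm, dPow_add hc, dPow_single_one]

end CommutingFamily

section OrderSpan

variable {ι S M : Type*} [Semiring S] [AddCommMonoid M] [Module S M]

variable (R : Type*) [CommSemiring R] [Module R M] in
/-- `F_k D · v`, for `F_k D` the order filtration of the operators generated by `R` and `D`. -/
def orderSpan (D : ι → M →ₗ[S] M) (v : M) (k : ℕ) : Submodule R M :=
  Submodule.span R {u | ∃ L : List ι, L.length ≤ k ∧ u = L.foldr (fun i w => D i w) v}

variable {R : Type*} [CommSemiring R] [Module R M] {D : ι → M →ₗ[S] M} (v : M)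

theorem orderSpan_mono : Monotone (orderSpan R D v) := fun _ _ hkl =>
  Submodule.span_mono fun _ ⟨L, hL, hu⟩ => ⟨L, hL.trans hkl, hu⟩

theorem apply_mem_orderSpan_succ {d : ι → R → R}
    (hD : ∀ i (g : R) u, D i (g • u) = g • D i u + d i g • u) {k : ℕ} {u : M}
    (hu : u ∈ orderSpan R D v k) (i : ι) : D i u ∈ orderSpan R D v (k + 1) := by
  induction hu using Submodule.span_induction with
  | mem u hu =>
    obtain ⟨L, hL, rfl⟩ := hu
    exact Submodule.subset_span ⟨i :: L, Nat.succ_le_succ hL, rfl⟩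
  | zero => simp
  | add u w _ _ hu hw => simpa using add_mem hu hw
  | smul g u hu ih =>
    rw [hD]
    exact add_mem (Submodule.smul_mem _ g ih)
      (Submodule.smul_mem _ _ (orderSpan_mono v k.le_succ hu))

theorem sInf_eq_iSup_orderSpan {d : ι → R → R}
    (hD : ∀ i (g : R) u, D i (g • u) = g • D i u + d i g • u) :
    sInf {N : Submodule R M | v ∈ N ∧ ∀ i, ∀ u ∈ N, D i u ∈ N} = ⨆ k, orderSpan R D v k := by
  refine le_antisymm (sInf_le ⟨?_, fun i u hu => ?_⟩) (iSup_le fun k => le_sInf ?_)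
  · exact Submodule.mem_iSup_of_mem 0 (Submodule.subset_span ⟨[], le_rfl, rfl⟩)
  · obtain ⟨k, hk⟩ := (Submodule.mem_iSup_of_directed _ (orderSpan_mono v).directed_le).1 hu
    exact Submodule.mem_iSup_of_mem (k + 1) (apply_mem_orderSpan_succ v hD hk i)
  · rintro N ⟨hv, hN⟩
    rw [orderSpan, Submodule.span_le]
    rintro _ ⟨L, -, rfl⟩
    induction L with
    | nil => exact hv
    | cons i L ih => exact hN i _ ih

theorem orderSpan_eq_span_dPow [DecidableEq ι] (hc : ∀ i j, Commute (D i) (D j)) (k : ℕ) :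
    orderSpan R D v k =
      Submodule.span R {u | ∃ β : ι →₀ ℕ, β.degree ≤ k ∧ u = dPow D β v} := by
  rw [orderSpan]
  congr 1
  ext u
  constructor
  · rintro ⟨L, hL, rfl⟩
    refine ⟨Multiset.toFinsupp L, ?_, by rw [List.foldr_apply_eq_prod_map, prod_map_eq_dPow hc]⟩
    rwa [← Finsupp.card_toMultiset_eq_degree, Multiset.toFinsupp_toMultiset, Multiset.coe_card]
  · rintro ⟨β, hβ, rfl⟩
    refine ⟨β.toMultiset.toList, ?_, (List.foldr_apply_eq_prod_map _ _).symm⟩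
    rwa [Multiset.length_toList, Finsupp.card_toMultiset_eq_degree]

theorem dPow_apply_mem_orderSpan [DecidableEq ι] (hc : ∀ i j, Commute (D i) (D j))
    (β : ι →₀ ℕ) : dPow D β v ∈ orderSpan R D v β.degree := by
  rw [orderSpan_eq_span_dPow v hc]
  exact Submodule.subset_span ⟨β, le_rfl, rfl⟩

end OrderSpan

section WeylModule

open MvPolynomial

variable {σ K S M : Type*} [CommRing K] [Semiring S] [AddCommGroup M]
  [Module (MvPolynomial σ K) M] [Module S M] {D : σ → M →ₗ[S] M}

theorem X_smul_dPow_add_single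
    (hD : ∀ i (g : MvPolynomial σ K) u, D i (g • u) = g • D i u + pderiv i g • u)
    (hc : ∀ i j, Commute (D i) (D j)) (γ : σ →₀ ℕ) (i : σ) (u : M) :
    (X i : MvPolynomial σ K) • dPow D (γ + Finsupp.single i 1) u =
      dPow D γ ((X i : MvPolynomial σ K) • D i u) - γ i • dPow D γ u := by
  induction γ using Finsupp.induction_single_one with
  | zero => simp [dPow_single_one]
  | add_single γ j ih =>
    have hX : ∀ w, (X i : MvPolynomial σ K) • D j w =
        D j ((X i : MvPolynomial σ K) • w) - pderiv j (X i : MvPolynomial σ K) • w := fun w => by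
      rw [hD]; abel
    rw [add_right_comm, dPow_add_single_one hc, Module.End.mul_apply, hX, ih,
      dPow_add_single_one hc, dPow_add_single_one hc, Module.End.mul_apply, Module.End.mul_apply,
      Module.End.mul_apply, map_sub, map_nsmul]
    rcases eq_or_ne j i with rfl | hji
    · simp only [pderiv_X_self, one_smul, Finsupp.add_apply, Finsupp.single_eq_same, succ_nsmul]
      abel
    · simp [pderiv_X_of_ne hji.symm, hji]

end WeylModule

section TwistedPDeriv

open MvPolynomial (pderiv)

variable {σ K : Type*} [CommRing K]

/-- The action of `∂_i` on `i_{f,+} R ≅ R[∂_t]`, with `∂_t` written `X`. -/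
def IsTwistedPDeriv (f : MvPolynomial σ K)
    (D : σ → (MvPolynomial σ K)[X] →ₗ[K] (MvPolynomial σ K)[X]) : Prop :=
  ∀ i g k, D i (C g * X ^ k) = C (pderiv i g) * X ^ k - C (pderiv i f * g) * X ^ (k + 1)

namespace IsTwistedPDeriv

variable {f : MvPolynomial σ K} {D : σ → (MvPolynomial σ K)[X] →ₗ[K] (MvPolynomial σ K)[X]}

theorem coeff_apply (hD : IsTwistedPDeriv f D) (i : σ) (u : (MvPolynomial σ K)[X]) (j : ℕ) :
    (D i u).coeff j = pderiv i (u.coeff j) - pderiv i f * (X * u).coeff j := by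
  induction u using Polynomial.induction_on' with
  | add p q hp hq => simp only [map_add, coeff_add, hp, hq, mul_add]; ring
  | monomial k g =>
    rw [← C_mul_X_pow_eq_monomial, hD, mul_left_comm, ← pow_succ']
    simp only [coeff_sub, coeff_C_mul_X_pow]
    split_ifs <;> simp

theorem apply_C (hD : IsTwistedPDeriv f D) (i : σ) (g : MvPolynomial σ K) :
    D i (C g) = C (pderiv i g) - C (pderiv i f * g) * X := by
  simpa using hD i g 0

theorem apply_smul (hD : IsTwistedPDeriv f D) (i : σ) (g : MvPolynomial σ K)
    (u : (MvPolynomial σ K)[X]) : D i (g • u) = g • D i u + pderiv i g • u := by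
  ext j : 1
  simp only [coeff_add, coeff_smul, hD.coeff_apply, mul_smul_comm, smul_eq_mul,
    Derivation.leibniz]
  ring

theorem apply_X_mul (hD : IsTwistedPDeriv f D) (i : σ) (u : (MvPolynomial σ K)[X]) :
    D i (X * u) = X * D i u := by
  ext (_ | j)
  · simp [hD.coeff_apply]
  · simp only [hD.coeff_apply, coeff_X_mul]

theorem commute (hD : IsTwistedPDeriv f D) (i j : σ) : Commute (D i) (D j) := by
  refine LinearMap.ext fun u => Polynomial.ext fun k => ?_
  simp only [Module.End.mul_apply, hD.coeff_apply, ← hD.apply_X_mul, map_sub,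
    Derivation.leibniz, smul_eq_mul, MvPolynomial.pderiv_comm i j]
  ring

theorem apply_mem_degreeLE (hD : IsTwistedPDeriv f D) (i : σ) {m : ℕ}
    {u : (MvPolynomial σ K)[X]} (hu : u ∈ degreeLE (MvPolynomial σ K) m) :
    D i u ∈ degreeLE (MvPolynomial σ K) ↑(m + 1) := by
  rw [mem_degreeLE, degree_le_iff_coeff_zero] at hu ⊢
  intro j hj
  have hj : m + 1 < j := by exact_mod_cast hj
  obtain ⟨j, rfl⟩ : ∃ j', j = j' + 1 := ⟨j - 1, by omega⟩
  rw [hD.coeff_apply, coeff_X_mul, hu _ (by exact_mod_cast (by omega : m < j + 1)),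
    hu _ (by exact_mod_cast (by omega : m < j))]
  simp

theorem orderSpan_le_degreeLE (hD : IsTwistedPDeriv f D) (g : MvPolynomial σ K) (k : ℕ) :
    orderSpan (MvPolynomial σ K) D (C g) k ≤ degreeLE (MvPolynomial σ K) k := by
  rw [orderSpan, Submodule.span_le]
  rintro _ ⟨L, hL, rfl⟩
  refine SetLike.mem_coe.2 <| degreeLE_mono (WithBot.coe_le_coe.2 hL) ?_
  clear hL
  induction L with
  | nil => exact mem_degreeLE.2 degree_C_le
  | cons i L ih => exact hD.apply_mem_degreeLE i ih

theorem coeff_dPow_eq_zero [DecidableEq σ] (hD : IsTwistedPDeriv f D) (β : σ →₀ ℕ)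
    (g : MvPolynomial σ K) {j : ℕ} (hj : β.degree < j) : (dPow D β (C g)).coeff j = 0 := by
  have h := hD.orderSpan_le_degreeLE g _ (dPow_apply_mem_orderSpan (C g) hD.commute β)
  exact (degree_le_iff_coeff_zero _ _).1 (mem_degreeLE.1 h) j (by exact_mod_cast hj)

end IsTwistedPDeriv

end TwistedPDeriv

section MonomialTwist

open MvPolynomial (pderiv)

variable {σ K : Type*} [Field K]
  {D : σ → (MvPolynomial σ K)[X] →ₗ[K] (MvPolynomial σ K)[X]} {a b : σ →₀ ℕ}

noncomputable def negPow (a β : σ →₀ ℕ) : K := β.prod fun r k => (-(a r : K)) ^ k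

theorem negPow_add_single (a β : σ →₀ ℕ) (i : σ) :
    negPow (K := K) a (β + Finsupp.single i 1) = -(a i : K) * negPow a β := by
  rw [negPow, negPow, Finsupp.prod_add_index' (by simp) (fun _ _ _ => pow_add _ _ _),
    Finsupp.prod_single_index (by simp), pow_one, mul_comm]

theorem negPow_ne_zero [CharZero K] {β : σ →₀ ℕ} (hβ : β.support ⊆ a.support) :
    negPow (K := K) a β ≠ 0 :=
  Finset.prod_ne_zero_iff.2 fun _ hr =>
    pow_ne_zero _ (neg_ne_zero.2 (Nat.cast_ne_zero.2 (Finsupp.mem_support_iff.1 (hβ hr))))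

theorem coeff_dPow_degree [DecidableEq σ] (hD : IsTwistedPDeriv (MvPolynomial.monomial a 1) D)
    {β : σ →₀ ℕ} (hβ : β.support ⊆ a.support) :
    (dPow D β (C (MvPolynomial.monomial b 1))).coeff β.degree =
      MvPolynomial.monomial (b + β.degree • a - β) (negPow a β) := by
  induction β using Finsupp.induction_single_one with
  | zero => simp [negPow]
  | add_single β i ih =>
    have hβ' : β.support ⊆ a.support := fun r hr => hβ (by
      simp only [Finsupp.mem_support_iff, Finsupp.add_apply] at hr ⊢; omega)
    have hai : 1 ≤ a i := Nat.one_le_iff_ne_zero.2 <|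
      Finsupp.mem_support_iff.1 (hβ (by simp [Finsupp.mem_support_iff]))
    have hle := Finsupp.le_add_degree_smul hβ' b
    rw [dPow_add_single_one hD.commute, Module.End.mul_apply, map_add, Finsupp.degree_single,
      hD.coeff_apply, coeff_X_mul, hD.coeff_dPow_eq_zero _ _ (Nat.lt_succ_self _), ih hβ',
      map_zero, MvPolynomial.pderiv_monomial, MvPolynomial.monomial_mul, zero_sub,
      ← LinearMap.map_neg, negPow_add_single]
    refine congrArg₂ (fun e c => MvPolynomial.monomial e c) ?_ ?_
    · ext r
      have := hle r
      simp only [Finsupp.add_apply, Finsupp.tsub_apply, Finsupp.smul_apply, smul_eq_mul,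
        Finsupp.single_apply, add_mul, one_mul] at this ⊢
      split_ifs <;> subst_vars <;> omega
    · simp [mul_comm]

theorem dPow_eq_zero (hD : IsTwistedPDeriv (MvPolynomial.monomial a 1) D)
    (hb : b.support ⊆ a.support) {β : σ →₀ ℕ} (hβ : ¬ β.support ⊆ a.support) :
    dPow D β (C (MvPolynomial.monomial b 1)) = 0 := by
  obtain ⟨r, hβr, har⟩ := Set.not_subset.1 hβ
  simp only [Finset.mem_coe, Finsupp.mem_support_iff, ne_eq, not_not] at hβr har
  have hbr : b r = 0 := by
    by_contra h
    exact (Finsupp.mem_support_iff.1 (hb (Finsupp.mem_support_iff.2 h))) har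
  rw [← Finsupp.sub_add_single_one_cancel hβr, dPow_add hD.commute, dPow_single_one,
    Module.End.mul_apply, hD.apply_C]
  simp [MvPolynomial.pderiv_monomial, har, hbr]

theorem X_smul_apply_C_monomial (hD : IsTwistedPDeriv (MvPolynomial.monomial a 1) D) (i : σ) :
    (MvPolynomial.X i : MvPolynomial σ K) • D i (C (MvPolynomial.monomial b 1)) =
      b i • C (MvPolynomial.monomial b 1) - a i • (C (MvPolynomial.monomial (a + b) 1) * X) := by
  rw [hD.apply_C, smul_sub, smul_eq_C_mul, smul_eq_C_mul, ← mul_assoc, ← map_mul, ← map_mul,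
    MvPolynomial.X_mul_pderiv_monomial, ← mul_assoc, MvPolynomial.X_mul_pderiv_monomial,
    smul_mul_assoc, MvPolynomial.monomial_mul, mul_one]
  simp [mul_assoc]

theorem euler_relation_dPow (hD : IsTwistedPDeriv (MvPolynomial.monomial a 1) D) (γ : σ →₀ ℕ)
    (i j : σ) :
    (a j : K) • ((MvPolynomial.X i : MvPolynomial σ K) •
        dPow D (γ + Finsupp.single i 1) (C (MvPolynomial.monomial b 1))) -
      (a i : K) • ((MvPolynomial.X j : MvPolynomial σ K) •
        dPow D (γ + Finsupp.single j 1) (C (MvPolynomial.monomial b 1))) =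
      ((a j : K) * (b i - γ i) - (a i : K) * (b j - γ j)) •
        dPow D γ (C (MvPolynomial.monomial b 1)) := by
  simp only [X_smul_dPow_add_single hD.apply_smul hD.commute, X_smul_apply_C_monomial hD,
    map_sub, ← Nat.cast_smul_eq_nsmul K, map_smul]
  module

noncomputable def monicGen (D : σ → (MvPolynomial σ K)[X] →ₗ[K] (MvPolynomial σ K)[X])
    (a b δ β : σ →₀ ℕ) : (MvPolynomial σ K)[X] :=
  (negPow a β : K)⁻¹ • (MvPolynomial.monomial δ (1 : K) • dPow D β (C (MvPolynomial.monomial b 1)))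

theorem coeff_monicGen [CharZero K] [DecidableEq σ]
    (hD : IsTwistedPDeriv (MvPolynomial.monomial a 1) D) {β : σ →₀ ℕ} (hβ : β.support ⊆ a.support)
    (δ : σ →₀ ℕ) :
    (monicGen D a b δ β).coeff β.degree = MvPolynomial.monomial (δ + (b + β.degree • a - β)) 1 := by
  rw [monicGen, coeff_smul, coeff_smul, coeff_dPow_degree hD hβ, smul_eq_mul,
    MvPolynomial.monomial_mul, one_mul, MvPolynomial.smul_monomial, smul_eq_mul,
    inv_mul_cancel₀ (negPow_ne_zero hβ)]

theorem monicGen_sub_mem_orderSpan_of_exchange [CharZero K] [DecidableEq σ]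
    (hD : IsTwistedPDeriv (MvPolynomial.monomial a 1) D) {γ : σ →₀ ℕ}
    (hγ : γ.support ⊆ a.support) {i j : σ} (hai : a i ≠ 0) (haj : a j ≠ 0) (μ : σ →₀ ℕ) :
    monicGen D a b (μ + Finsupp.single i 1) (γ + Finsupp.single i 1) -
        monicGen D a b (μ + Finsupp.single j 1) (γ + Finsupp.single j 1) ∈
      orderSpan (MvPolynomial σ K) D (C (MvPolynomial.monomial b 1)) γ.degree := by
  have hγ₀ := negPow_ne_zero (K := K) hγ
  have hmonic : ∀ k, monicGen D a b (μ + Finsupp.single k 1) (γ + Finsupp.single k 1) =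
      MvPolynomial.monomial μ (1 : K) • ((-(a k : K) * negPow a γ)⁻¹ •
        ((MvPolynomial.X k : MvPolynomial σ K) •
          dPow D (γ + Finsupp.single k 1) (C (MvPolynomial.monomial b 1)))) := fun k => by
    rw [monicGen, negPow_add_single, smul_comm (MvPolynomial.monomial μ (1 : K)),
      ← mul_smul (MvPolynomial.monomial μ (1 : K)), MvPolynomial.X, MvPolynomial.monomial_mul,
      mul_one]
  rw [hmonic, hmonic, ← smul_sub]
  rw [show ∀ w w' : (MvPolynomial σ K)[X],
      (-(a i : K) * negPow a γ)⁻¹ • w - (-(a j : K) * negPow a γ)⁻¹ • w' =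
        (-(negPow a γ * a i * a j : K))⁻¹ • ((a j : K) • w - (a i : K) • w') from fun w w' => by
    match_scalars <;> field_simp]
  rw [euler_relation_dPow hD]
  exact Submodule.smul_mem _ _ <| Submodule.smul_of_tower_mem _ _ <|
    Submodule.smul_of_tower_mem _ _ <| dPow_apply_mem_orderSpan _ hD.commute γ

theorem monicGen_sub_mem_orderSpan [CharZero K] [DecidableEq σ]
    (hD : IsTwistedPDeriv (MvPolynomial.monomial a 1) D) {m : ℕ} {β β' δ δ' : σ →₀ ℕ}
    (hβ : β.degree = m + 1) (hβ' : β'.degree = m + 1) (hβa : β.support ⊆ a.support)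
    (hβ'a : β'.support ⊆ a.support) (hδ : δ + β' = δ' + β) :
    monicGen D a b δ β - monicGen D a b δ' β' ∈
      orderSpan (MvPolynomial σ K) D (C (MvPolynomial.monomial b 1)) m := by
  induction hN : (β - β').degree generalizing β δ with
  | zero =>
    have hle : β ≤ β' := tsub_eq_zero_iff_le.1 ((Finsupp.degree_eq_zero_iff _).1 hN)
    obtain rfl := Finsupp.eq_of_le_of_degree_le hle (by omega)
    obtain rfl := add_right_cancel hδ
    simp
  | succ N ih =>
    have hne : β ≠ β' := by rintro rfl; simp at hN
    obtain ⟨i, hi⟩ := Finsupp.exists_lt_of_ne_of_degree_eq hne (hβ.trans hβ'.symm)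
    obtain ⟨j, hj⟩ := Finsupp.exists_lt_of_ne_of_degree_eq hne.symm (hβ'.trans hβ.symm)
    have hδi : δ i ≠ 0 := by have := DFunLike.congr_fun hδ i; simp at this; omega
    have hai : a i ≠ 0 := Finsupp.mem_support_iff.1 (hβa (Finsupp.mem_support_iff.2 (by omega)))
    have haj : a j ≠ 0 := Finsupp.mem_support_iff.1 (hβ'a (Finsupp.mem_support_iff.2 (by omega)))
    have hβi : β i ≠ 0 := by omega
    have hγa : (β - Finsupp.single i 1).support ⊆ a.support := fun r hr =>
      hβa (Finsupp.support_mono tsub_le_self hr)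
    have hγ : (β - Finsupp.single i 1).degree = m := by
      have := congrArg Finsupp.degree (Finsupp.sub_add_single_one_cancel hβi)
      rw [map_add, Finsupp.degree_single] at this
      omega
    have hstep := monicGen_sub_mem_orderSpan_of_exchange (b := b) hD hγa hai haj
      (δ - Finsupp.single i 1)
    rw [Finsupp.sub_add_single_one_cancel hβi, Finsupp.sub_add_single_one_cancel hδi, hγ] at hstep
    refine (sub_add_sub_cancel _ (monicGen D a b _ _) _) ▸
      add_mem hstep (ih ?_ ?_ (Finsupp.exchange_add_eq hi hδ) ?_)
    · rw [map_add, hγ, Finsupp.degree_single]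
    · intro r hr
      rcases eq_or_ne r j with rfl | hrj
      · exact Finsupp.mem_support_iff.2 haj
      · exact hγa (by simpa [Finsupp.single_apply, hrj.symm] using hr)
    · have := congrArg Finsupp.degree (Finsupp.exchange_sub_add_single hi hj)
      rw [map_add, Finsupp.degree_single, hN] at this
      omega

theorem exists_sub_sum_monicGen_mem_orderSpan [CharZero K] [DecidableEq σ]
    (hD : IsTwistedPDeriv (MvPolynomial.monomial a 1) D) (hb : b.support ⊆ a.support) {m : ℕ}
    {u : (MvPolynomial σ K)[X]}
    (hu : u ∈ orderSpan (MvPolynomial σ K) D (C (MvPolynomial.monomial b 1)) (m + 1)) :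
    ∃ s : Finset ((σ →₀ ℕ) × (σ →₀ ℕ)), ∃ c : (σ →₀ ℕ) × (σ →₀ ℕ) → K,
      (∀ p ∈ s, p.2.degree = m + 1 ∧ p.2.support ⊆ a.support) ∧
      u - ∑ p ∈ s, c p • monicGen D a b p.1 p.2 ∈
        orderSpan (MvPolynomial σ K) D (C (MvPolynomial.monomial b 1)) m := by
  set W := orderSpan (MvPolynomial σ K) D (C (MvPolynomial.monomial b 1))
  set G := {p : (σ →₀ ℕ) × (σ →₀ ℕ) | p.2.degree = m + 1 ∧ p.2.support ⊆ a.support}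
  have hspan : Submodule.span K
      (Set.range fun δ : σ →₀ ℕ => MvPolynomial.monomial δ (1 : K)) = ⊤ := by
    simpa using (MvPolynomial.basisMonomials σ K).span_eq
  have hle : (W (m + 1)).restrictScalars K ≤
      (W m).restrictScalars K ⊔ Submodule.span K ((fun p => monicGen D a b p.1 p.2) '' G) := by
    rw [show W (m + 1) = _ from orderSpan_eq_span_dPow _ hD.commute _,
      ← Submodule.span_smul_of_span_eq_top hspan,
      Submodule.span_le]
    rintro _ ⟨_, ⟨δ, rfl⟩, _, ⟨β, hβ, rfl⟩, rfl⟩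
    dsimp only
    by_cases hβa : β.support ⊆ a.support
    · rcases hβ.lt_or_eq with hlt | heq
      · exact Submodule.mem_sup_left <| Submodule.smul_mem _ _ <|
          orderSpan_mono _ (Nat.lt_succ_iff.1 hlt) (dPow_apply_mem_orderSpan _ hD.commute β)
      · refine Submodule.mem_sup_right ?_
        rw [show MvPolynomial.monomial δ (1 : K) • dPow D β (C (MvPolynomial.monomial b 1)) =
            negPow a β • monicGen D a b δ β by rw [monicGen, smul_inv_smul₀ (negPow_ne_zero hβa)]]
        exact Submodule.smul_mem _ _ (Submodule.subset_span ⟨(δ, β), ⟨heq, hβa⟩, rfl⟩)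
    · simp [dPow_eq_zero hD hb hβa]
  obtain ⟨w, hw, y, hy, rfl⟩ := Submodule.mem_sup.1 (hle hu)
  obtain ⟨l, hl, rfl⟩ := (Finsupp.mem_span_image_iff_linearCombination K).1 hy
  exact ⟨l.support, l, fun p hp => hl hp, by simpa [Finsupp.linearCombination_apply, Finsupp.sum]⟩

theorem mem_orderSpan_of_coeff_eq_zero [CharZero K] [DecidableEq σ]
    (hD : IsTwistedPDeriv (MvPolynomial.monomial a 1) D) (hb : b.support ⊆ a.support) {m : ℕ}
    {u : (MvPolynomial σ K)[X]}
    (hu : u ∈ orderSpan (MvPolynomial σ K) D (C (MvPolynomial.monomial b 1)) (m + 1))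
    (hu₀ : u.coeff (m + 1) = 0) :
    u ∈ orderSpan (MvPolynomial σ K) D (C (MvPolynomial.monomial b 1)) m := by
  obtain ⟨s, c, hs, hw⟩ := exists_sub_sum_monicGen_mem_orderSpan hD hb hu
  set y := ∑ p ∈ s, c p • monicGen D a b p.1 p.2
  have hy₀ : y.coeff (m + 1) = 0 := by
    have := (degree_le_iff_coeff_zero _ _).1 (mem_degreeLE.1 (hD.orderSpan_le_degreeLE _ m hw))
      (m + 1) (by exact_mod_cast m.lt_succ_self)
    rwa [coeff_sub, hu₀, zero_sub, neg_eq_zero] at this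
  have hy : y.coeff (m + 1) = ∑ p ∈ s, c p • MvPolynomial.monomial
      (p.1 + (b + (m + 1) • a - p.2)) (1 : K) := by
    rw [finsetSum_coeff]
    refine Finset.sum_congr rfl fun p hp => ?_
    rw [coeff_smul, ← (hs p hp).1, coeff_monicGen hD (hs p hp).2]
  refine sub_add_cancel u y ▸ add_mem hw <|
    Submodule.sum_smul_mem_of_sum_fiber_eq_zero ((orderSpan _ D _ m).restrictScalars K) s c _
      (fun p => p.1 + (b + (m + 1) • a - p.2)) (fun e => ?_) fun p hp q hq hpq => ?_
  · have := congrArg (MvPolynomial.coeff e) (hy ▸ hy₀)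
    simpa [MvPolynomial.coeff_sum, MvPolynomial.coeff_monomial, Finset.sum_filter] using this
  · have hle : ∀ p ∈ s, p.2 ≤ b + (m + 1) • a := fun p hp =>
      (hs p hp).1 ▸ Finsupp.le_add_degree_smul (hs p hp).2 b
    exact monicGen_sub_mem_orderSpan hD (hs p hp).1 (hs q hq).1 (hs p hp).2 (hs q hq).2
      (Finsupp.add_eq_add_of_add_tsub_eq (hle p hp) (hle q hq) hpq)

theorem degreeLE_inf_iSup_orderSpan [CharZero K] [DecidableEq σ]
    (hD : IsTwistedPDeriv (MvPolynomial.monomial a 1) D) (hb : b.support ⊆ a.support) (k : ℕ) :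
    degreeLE (MvPolynomial σ K) k ⊓
        ⨆ m, orderSpan (MvPolynomial σ K) D (C (MvPolynomial.monomial b 1)) m =
      orderSpan (MvPolynomial σ K) D (C (MvPolynomial.monomial b 1)) k := by
  refine le_antisymm (fun u hu => ?_) (le_inf (hD.orderSpan_le_degreeLE _ k) (le_iSup _ k))
  obtain ⟨hdeg, hu⟩ := Submodule.mem_inf.1 hu
  obtain ⟨m, hm⟩ := (Submodule.mem_iSup_of_directed _ (orderSpan_mono _).directed_le).1 hu
  have descend : ∀ j, u ∈ orderSpan (MvPolynomial σ K) D (C (MvPolynomial.monomial b 1)) (k + j) →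
      u ∈ orderSpan (MvPolynomial σ K) D (C (MvPolynomial.monomial b 1)) k := by
    intro j
    induction j with
    | zero => exact id
    | succ j ih =>
      refine fun h => ih (mem_orderSpan_of_coeff_eq_zero hD hb h ?_)
      exact (degree_le_iff_coeff_zero _ _).1 (mem_degreeLE.1 hdeg) _ (by exact_mod_cast (by omega))
  exact descend m (orderSpan_mono _ (by omega) hm)

end MonomialTwist

theorem stmt10_general {n : ℕ} (a : Fin n → ℕ)
    (f : MvPolynomial (Fin n) ℂ) (hf : f = ∏ r, MvPolynomial.X r ^ a r)
    (Di : Fin n →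
      (Polynomial (MvPolynomial (Fin n) ℂ) →ₗ[ℂ] Polynomial (MvPolynomial (Fin n) ℂ)))
    (hDi : ∀ (i : Fin n) (g : MvPolynomial (Fin n) ℂ) (k : ℕ),
      Di i (C g * X ^ k) =
        C (MvPolynomial.pderiv i g) * X ^ k -
          C (MvPolynomial.pderiv i f * g) * X ^ (k + 1))
    (b : Fin n → ℕ) (hb : ∀ i, b i ≠ 0 → a i ≠ 0) (k : ℕ) :
    Submodule.span (MvPolynomial (Fin n) ℂ)
        {p : Polynomial (MvPolynomial (Fin n) ℂ) | ∃ i ≤ k, p = X ^ i} ⊓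
      sInf {S : Submodule (MvPolynomial (Fin n) ℂ) (Polynomial (MvPolynomial (Fin n) ℂ)) |
          C (∏ r, MvPolynomial.X r ^ b r) ∈ S ∧ ∀ i, ∀ u ∈ S, Di i u ∈ S} =
    Submodule.span (MvPolynomial (Fin n) ℂ)
        {u : Polynomial (MvPolynomial (Fin n) ℂ) | ∃ L : List (Fin n), L.length ≤ k ∧
          u = L.foldr (fun i v => Di i v) (C (∏ r, MvPolynomial.X r ^ b r))} := by
  subst hf
  simp only [MvPolynomial.prod_X_pow_eq_monomial_equivFunOnFinite] at hDi ⊢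
  rw [Polynomial.span_X_pow_eq_degreeLE, sInf_eq_iSup_orderSpan _ (IsTwistedPDeriv.apply_smul hDi)]
  exact degreeLE_inf_iSup_orderSpan hDi (fun r => by simpa using hb r) k

/-- For `f = x^a` a monomial with nonempty support `I`, on `N = R[T]`
(`R = ℂ[x₁,…,x_n]`, modelled as `Polynomial R` with `T = X`) with operators
`∂_i (h T^k) = (∂h/∂x_i) T^k − (∂f/∂x_i) h T^{k+1}`, and `b` with `supp b ⊆ I`:
the intersection of the t-order filtration `F_k^{t-ord} N = Σ_{i≤k} R T^i` with
the D-submodule generated by `x^b T^0` equals `F_k D · (x^b T^0)`, the `R`-span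
of the elements obtained from `x^b T^0` by applying at most `k` of the `∂_i`. -/
theorem stmt10 {n : ℕ} (a : Fin n → ℕ) (hI : ∃ i, a i ≠ 0)
    (f : MvPolynomial (Fin n) ℂ) (hf : f = ∏ r, MvPolynomial.X r ^ a r)
    (Di : Fin n →
      (Polynomial (MvPolynomial (Fin n) ℂ) →ₗ[ℂ] Polynomial (MvPolynomial (Fin n) ℂ)))
    (hDi : ∀ (i : Fin n) (g : MvPolynomial (Fin n) ℂ) (k : ℕ),
      Di i (C g * X ^ k) =
        C (MvPolynomial.pderiv i g) * X ^ k -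
          C (MvPolynomial.pderiv i f * g) * X ^ (k + 1))
    (b : Fin n → ℕ) (hb : ∀ i, b i ≠ 0 → a i ≠ 0) (k : ℕ) :
    Submodule.span (MvPolynomial (Fin n) ℂ)
        {p : Polynomial (MvPolynomial (Fin n) ℂ) | ∃ i ≤ k, p = X ^ i} ⊓
      sInf {S : Submodule (MvPolynomial (Fin n) ℂ) (Polynomial (MvPolynomial (Fin n) ℂ)) |
          C (∏ r, MvPolynomial.X r ^ b r) ∈ S ∧ ∀ i, ∀ u ∈ S, Di i u ∈ S} =
    Submodule.span (MvPolynomial (Fin n) ℂ)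
        {u : Polynomial (MvPolynomial (Fin n) ℂ) | ∃ L : List (Fin n), L.length ≤ k ∧
          u = L.foldr (fun i v => Di i v) (C (∏ r, MvPolynomial.X r ^ b r))} :=
  stmt10_general a f hf Di hDi b hb k
end

section
/- Let R be a commutative domain that is a ℚ-algebra, let f ∈ R be nonzero, and let M := R[1/f] be the localization. Let N := M[T] be the free M-module on {T^j : j ≥ 0}. Define M-semilinear operators on N: ∂(u T^j) := u T^{j+1}; t(u T^j) := f u T^j − j u T^{j−1}; and s := −∂ ∘ t. Fix α ∈ ℚ, and define the R-linear map ψ_α : N → M by ψ_α(u T^j) := Q_j(α) · u · f^{−j}, where Q_j(α) := α(α+1)···(α+j−1), Q_0 := 1. Then the kernel of ψ_α equals the image of the operator (s + α) : N → N. -/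
/-!
`ψ_α` kills `(s + α)(u T^n)` because `Q_{n+1}(α) = Q_n(α) (α + n)` and `f · f⁻¹ = 1`.
Conversely, `(s + α)(f⁻¹ c T^n)` has leading term `-c T^{n+1}`, so subtracting such images
lowers the degree of any element of `ker ψ_α` until it is a constant, on which `ψ_α` is the
identity.
-/

open Polynomial

section

variable {S : Type*} [CommRing S] [Algebra ℚ S]

/- `F` stands for `f` and `g` for `f⁻¹`. -/
noncomputable def psi (g : S) (α : ℚ) : S[X] →ₗ[S] S :=
  lsum fun j => (ascPochhammer ℚ j).eval α • LinearMap.mulRight S (g ^ j)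

noncomputable def sAddSMul (F : S) (α : ℚ) : S[X] →ₗ[S] S[X] :=
  -(LinearMap.mulLeft S X ∘ₗ (LinearMap.mulLeft S (C F) - derivative)) + α • LinearMap.id

theorem psi_apply (g : S) (α : ℚ) (p : S[X]) :
    psi g α p = p.sum fun j u => (ascPochhammer ℚ j).eval α • (u * g ^ j) := rfl

theorem sAddSMul_apply (F : S) (α : ℚ) (p : S[X]) :
    sAddSMul F α p = -(X * (C F * p - derivative p)) + α • p := rfl

theorem psi_monomial (g : S) (α : ℚ) (n : ℕ) (a : S) :
    psi g α (monomial n a) = (ascPochhammer ℚ n).eval α • (a * g ^ n) := by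
  simp [psi_apply]

theorem psi_C (g : S) (α : ℚ) (a : S) : psi g α (C a) = a := by
  simp [← monomial_zero_left, psi_monomial]

theorem X_mul_derivative_monomial (n : ℕ) (b : S) :
    X * derivative (monomial n b) = monomial n ((n : ℚ) • b) := by
  cases n with
  | zero => simp
  | succ m =>
    rw [derivative_monomial, X_mul_monomial, Nat.add_sub_cancel, Nat.cast_smul_eq_nsmul,
      nsmul_eq_mul, mul_comm]

theorem sAddSMul_monomial (F : S) (α : ℚ) (n : ℕ) (b : S) :
    sAddSMul F α (monomial n b) =
      monomial (n + 1) (-(F * b)) + monomial n (((n : ℚ) + α) • b) := by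
  rw [sAddSMul_apply, mul_sub, X_mul_derivative_monomial, C_mul_monomial, X_mul_monomial,
    add_smul, map_add, smul_monomial, monomial_neg]
  abel

theorem psi_sAddSMul_monomial {F g : S} (hFg : F * g = 1) (α : ℚ) (n : ℕ) (b : S) :
    psi g α (sAddSMul F α (monomial n b)) = 0 := by
  have hg : -(F * b) * g ^ (n + 1) = -(b * g ^ n) := by
    linear_combination (-(b * g ^ n)) * hFg
  rw [sAddSMul_monomial, map_add, psi_monomial, psi_monomial, hg, ascPochhammer_succ_eval,
    smul_mul_assoc, mul_smul, add_comm α, smul_neg, smul_neg, neg_add_cancel]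

theorem psi_comp_sAddSMul {F g : S} (hFg : F * g = 1) (α : ℚ) :
    psi g α ∘ₗ sAddSMul F α = 0 :=
  lhom_ext' fun n => LinearMap.ext fun b => psi_sAddSMul_monomial hFg α n b

theorem natDegree_add_sAddSMul_le {F g : S} (hFg : F * g = 1) (α : ℚ) {p : S[X]} {n : ℕ}
    (hp : p.natDegree ≤ n + 1) :
    (p + sAddSMul F α (monomial n (g * p.coeff (n + 1)))).natDegree ≤ n := by
  rw [natDegree_le_iff_coeff_eq_zero]
  intro k hk
  rw [coeff_add, sAddSMul_monomial, coeff_add, coeff_monomial, coeff_monomial, if_neg hk.ne,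
    add_zero]
  rcases (Nat.succ_le_of_lt hk).eq_or_lt with rfl | hk'
  · rw [if_pos rfl, ← mul_assoc, hFg, one_mul, add_neg_cancel]
  · rw [if_neg hk'.ne, coeff_eq_zero_of_natDegree_lt (hp.trans_lt hk'), add_zero]

theorem mem_range_sAddSMul_of_psi_eq_zero {F g : S} (hFg : F * g = 1) (α : ℚ) :
    ∀ (n : ℕ) (p : S[X]), p.natDegree ≤ n → psi g α p = 0 →
      p ∈ LinearMap.range (sAddSMul F α)
  | 0, p, hp, hψ => by
    rw [eq_C_of_natDegree_le_zero hp, psi_C] at hψ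
    rw [eq_C_of_natDegree_le_zero hp, hψ, C_0]
    exact zero_mem _
  | n + 1, p, hp, hψ => by
    set r := sAddSMul F α (monomial n (g * p.coeff (n + 1)))
    have hr : r ∈ LinearMap.range (sAddSMul F α) := LinearMap.mem_range_self _ _
    have hψr : psi g α r = 0 := LinearMap.congr_fun (psi_comp_sAddSMul hFg α) _
    have hpr := mem_range_sAddSMul_of_psi_eq_zero hFg α n (p + r)
      (natDegree_add_sAddSMul_le hFg α hp) (by rw [map_add, hψ, hψr, add_zero])
    simpa using sub_mem hpr hr

theorem ker_psi_eq_range_sAddSMul {F g : S} (hFg : F * g = 1) (α : ℚ) :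
    LinearMap.ker (psi g α) = LinearMap.range (sAddSMul F α) := by
  refine le_antisymm (fun p hp => mem_range_sAddSMul_of_psi_eq_zero hFg α _ p le_rfl hp) ?_
  rw [LinearMap.range_le_ker_iff]
  exact psi_comp_sAddSMul hFg α

end

theorem stmt16_general {R : Type*} [CommRing R]
    (f : R)
    {S : Type*} [CommRing S] [Algebra R S] [IsLocalization.Away f S]
    [Algebra ℚ S] (α : ℚ) :
    {p : Polynomial S |
        (p.sum fun j u => ((ascPochhammer ℚ j).eval α) •
          (u * (IsLocalization.Away.invSelf (S := S) f) ^ j)) = 0} =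
      Set.range (fun p : Polynomial S =>
        -(X * (C (algebraMap R S f) * p - derivative p)) + α • p) :=
  congrArg SetLike.coe (ker_psi_eq_range_sAddSMul (IsLocalization.Away.mul_invSelf f) α)

/-- Let `R` be a `ℚ`-algebra domain, `f ≠ 0`, and `S = R[1/f]` the localization
away from `f` (a `ℚ`-algebra compatibly). On `N = S[T]` (modelled as
`Polynomial S`, `T = X`) define `∂ q = X q`, `t p = f p − p'`, `s = −∂ ∘ t`, and
`ψ_α (u T^j) = Q_j(α) u f^{−j}` with `Q_j` the rising factorial. Then
`ker ψ_α = im (s + α)`. -/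
theorem stmt16 {R : Type*} [CommRing R] [IsDomain R] [Algebra ℚ R]
    (f : R) (hf : f ≠ 0)
    {S : Type*} [CommRing S] [Algebra R S] [IsLocalization.Away f S]
    [Algebra ℚ S] [IsScalarTower ℚ R S] (α : ℚ) :
    {p : Polynomial S |
        (p.sum fun j u => ((ascPochhammer ℚ j).eval α) •
          (u * (IsLocalization.Away.invSelf (S := S) f) ^ j)) = 0} =
      Set.range (fun p : Polynomial S =>
        -(X * (C (algebraMap R S f) * p - derivative p)) + α • p) :=
  stmt16_general f α
end
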